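/- Let k ≥ 2 be an integer such that k+1 is divisible by neither 3 nor 4, and let L be a real number such that a_k(n)/n converges to L as n → ∞. Then L ≤ (k(k+1)+1)/(4k). -/

import Mathlib

open Finset Filter

/-- The four directions: horizontal, vertical and the two diagonals. -/
def Dirs : Finset (ℤ × ℤ) := {(1, 0), (0, 1), (1, 1), (1, -1)}

/-- `p` is the start of a pattern of length `k` of `S` in direction `d`:
`p + t • d ∈ S` for all `0 ≤ t < k`, while `p - d ∉ S` and `p + k • d ∉ S`. -/
def IsPatternStart (S : Finset (ℤ × ℤ)) (k : ℕ) (d p : ℤ × ℤ) : Prop :=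
  (∀ t : ℕ, t < k → p + (t : ℤ) • d ∈ S) ∧ p - d ∉ S ∧ p + (k : ℤ) • d ∉ S

/-- `P_k(S)`: the number of pairs `(d, p)` with `d ∈ Dirs` and `p` the start of a
pattern of length `k` of `S` in direction `d`. -/
noncomputable def patternCount (S : Finset (ℤ × ℤ)) (k : ℕ) : ℕ :=
  Set.ncard {dp : (ℤ × ℤ) × (ℤ × ℤ) | dp.1 ∈ Dirs ∧ IsPatternStart S k dp.1 dp.2}

/-- `a_k(n)`: the minimum cardinality of a finite `S ⊆ ℤ × ℤ` with exactly `n`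
patterns of length `k`. -/
noncomputable def minPoints (k n : ℕ) : ℕ :=
  sInf {c | ∃ S : Finset (ℤ × ℤ), patternCount S k = n ∧ S.card = c}

/-!
Write `n = k + 1` and let `σ` be a permutation of `ZMod n` such that, among the queens at `(σ r, r)`
on the toroidal `n × n` board, at most four (queen, diagonal direction) pairs see another queen.
For `3 ∤ n`, `4 ∤ n` the map `r ↦ 2r` works when `n` is odd, and a perturbation of `r ↦ 3r` when
`n ≡ 2 [MOD 4]`. Tile an `n (m + 1) × n (m + 1)` box with this board and remove the queens to get `S`.
Along rows, columns and the diagonals of unattacked queens the next queen is exactly `n` steps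
away, so the `k` points in between form a pattern of length `k`. This gives `(4n - 4) m² = 4k m²`
patterns, while `|S| = k (k + 1) (m + 1)²`; so `a_k(P) / P ≤ (k + 1) (m + 1)² / (4 m²)` along
`P = P_k(S) → ∞`, and the right side tends to `(k + 1) / 4 < (k (k + 1) + 1) / (4 k)`.
-/

section UniqueFiber

variable {α β : Type*} [Fintype α] [DecidableEq α] [DecidableEq β]

def uniqueFiber (f : α → β) : Finset α :=
  univ.filter fun a => ∀ b, f b = f a → b = a

theorem uniqueFiber_eq_univ {f : α → β} (hf : Function.Injective f) : uniqueFiber f = univ :=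
  filter_true_of_mem fun _ _ _ h => hf h

theorem card_le_card_uniqueFiber_add_two {f : α → β} (a : α) (hf : Set.InjOn f {a}ᶜ) :
    Fintype.card α ≤ #(uniqueFiber f) + 2 := by
  have hsub : (uniqueFiber f)ᶜ ⊆ insert a (univ.filter fun b => b ≠ a ∧ f b = f a) := by
    intro b hb
    simp only [uniqueFiber, compl_filter, mem_filter, mem_univ, true_and, not_forall,
      exists_prop] at hb
    obtain ⟨c, hcb, hne⟩ := hb
    by_cases hba : b = a
    · exact hba ▸ mem_insert_self b _
    have hca : c = a := by
      by_contra hca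
      exact hne (hf hca hba hcb)
    exact mem_insert_of_mem (mem_filter.2 ⟨mem_univ _, hba, hca ▸ hcb.symm⟩)
  have hfiber : #(univ.filter fun b => b ≠ a ∧ f b = f a) ≤ 1 :=
    card_le_one.2 fun x hx y hy => by
      simp only [mem_filter, mem_univ, true_and] at hx hy
      exact hf hx.1 hy.1 (hx.2.trans hy.2.symm)
  calc Fintype.card α = #(uniqueFiber f) + #(uniqueFiber f)ᶜ := (card_add_card_compl _).symm
    _ ≤ #(uniqueFiber f) + 2 := by
      have := (card_le_card hsub).trans (card_insert_le _ _)
      omega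

end UniqueFiber

section NearQueens

variable {n : ℕ} [NeZero n]

/-- Queens at `(σ r, r)`, `r : ZMod n`, on the toroidal `n × n` board: one in every row and
column, and all but at most four (counted once per diagonal direction) alone on their diagonal
and antidiagonal. -/
def IsNearQueens (σ : ZMod n → ZMod n) : Prop :=
  Function.Injective σ ∧ 2 * n ≤ #(uniqueFiber (σ - id)) + #(uniqueFiber (σ + id)) + 4

theorem isNearQueens_two_mul (h : Nat.Coprime 6 n) : IsNearQueens fun r : ZMod n => 2 * r := by
  have hunit : ∀ c : ℕ, c ∣ 6 → IsUnit (c : ZMod n) := fun c hc =>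
    (ZMod.isUnit_iff_coprime c n).2 (Nat.Coprime.coprime_dvd_left hc h)
  have hdiag : (fun r : ZMod n => 2 * r) - id = id :=
    funext fun r => by simp only [Pi.sub_apply, id_eq]; ring
  have hanti : (fun r : ZMod n => 2 * r) + id = fun r => 3 * r :=
    funext fun r => by simp only [Pi.add_apply, id_eq]; ring
  refine ⟨by exact_mod_cast (hunit 2 (by norm_num)).mul_right_injective, ?_⟩
  rw [hdiag, hanti, uniqueFiber_eq_univ Function.injective_id,
    uniqueFiber_eq_univ (by exact_mod_cast (hunit 3 (by norm_num)).mul_right_injective),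
    card_univ, ZMod.card]
  omega

theorem Int.eq_of_dvd_sub_of_lt {c x y : ℤ} (hd : c ∣ x - y) (h₁ : x - y < c) (h₂ : y - x < c) :
    x = y :=
  sub_eq_zero.1 (Int.eq_zero_of_abs_lt_dvd hd (abs_sub_lt_iff.2 ⟨h₁, h₂⟩))

/-- On `0 < j < 2m` this is `j + [m ≤ j]`; with `0 ↦ m` it becomes a permutation of the residues
modulo `2m`. -/
def halfShift (m j : ℕ) : ℕ := if j = 0 then m else if j < m then j else j + 1

theorem eq_of_two_mul_dvd_halfShift {m a b : ℕ} (ha : a < 2 * m) (hb : b < 2 * m)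
    (h : (2 * m : ℤ) ∣ halfShift m b - halfShift m a) : a = b := by
  unfold halfShift at h
  have := Int.eq_of_dvd_sub_of_lt h (by split_ifs <;> omega) (by split_ifs <;> omega)
  split_ifs at this <;> omega

theorem eq_of_two_mul_dvd_two_mul_sub {m c a b : ℕ} (hc : Nat.Coprime c m)
    (h : (2 * m : ℤ) ∣ 2 * c * ((b : ℤ) - a)) (hab : (a : ℤ) - b < m) (hba : (b : ℤ) - a < m) :
    a = b := by
  rw [mul_assoc, mul_dvd_mul_iff_left two_ne_zero] at h
  have := Int.eq_of_dvd_sub_of_lt ((Nat.Coprime.isCoprime hc.symm).dvd_of_dvd_mul_left h) hba hab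
  omega

/-- For `c = 1` and `c = 2` this is the injectivity of `3 * halfShift m - id` and
`3 * halfShift m + id` away from `0`. There they are `2c j + 3 [m ≤ j]`: the parity separates
the two halves, and within a half `j` is determined modulo `m`. -/
theorem eq_of_two_mul_dvd_halfShift_sub {m c a b : ℕ} (hc : Nat.Coprime c m) (ha₀ : a ≠ 0)
    (hb₀ : b ≠ 0) (ha : a < 2 * m) (hb : b < 2 * m)
    (h : (2 * m : ℤ) ∣
      (3 * halfShift m b + (2 * c - 3) * b) - (3 * halfShift m a + (2 * c - 3) * a)) :
    a = b := by
  simp only [halfShift, if_neg ha₀, if_neg hb₀] at h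
  split_ifs at h with hbm ham ham
  · exact eq_of_two_mul_dvd_two_mul_sub hc (by convert h using 1; ring) (by omega) (by omega)
  · obtain ⟨q, hq⟩ := h; ring_nf at hq; omega
  · obtain ⟨q, hq⟩ := h; ring_nf at hq; omega
  · exact eq_of_two_mul_dvd_two_mul_sub hc (by convert h using 1; push_cast; ring)
      (by omega) (by omega)

theorem isNearQueens_three_mul_halfShift {m : ℕ} [NeZero m] (hm : Odd m) (h3 : Nat.Coprime 3 m) :
    IsNearQueens fun r : ZMod (2 * m) => 3 * (halfShift m r.val : ZMod (2 * m)) := by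
  set σ := fun r : ZMod (2 * m) => 3 * (halfShift m r.val : ZMod (2 * m))
  have hunit : IsUnit (3 : ZMod (2 * m)) := by
    exact_mod_cast (ZMod.isUnit_iff_coprime 3 (2 * m)).2 (Nat.Coprime.mul_right (by norm_num) h3)
  have hcast (c : ℤ) (r : ZMod (2 * m)) :
      σ r + c * r = ((3 * halfShift m r.val + c * r.val : ℤ) : ZMod (2 * m)) := by
    push_cast [σ, ZMod.natCast_zmod_val]
    rfl
  have hinjOn (c : ℕ) (hc : Nat.Coprime c m) :
      Set.InjOn (fun r => σ r + (2 * c - 3 : ℤ) * r) {0}ᶜ := fun r hr r' hr' h => by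
    simp only [hcast, ZMod.intCast_eq_intCast_iff_dvd_sub] at h
    exact ZMod.val_injective _ (eq_of_two_mul_dvd_halfShift_sub hc ((ZMod.val_ne_zero r).2 hr)
      ((ZMod.val_ne_zero r').2 hr') (ZMod.val_lt r) (ZMod.val_lt r') (by exact_mod_cast h))
  refine ⟨fun r r' h => ZMod.val_injective _ (eq_of_two_mul_dvd_halfShift (ZMod.val_lt r)
    (ZMod.val_lt r') ?_), ?_⟩
  · exact (ZMod.intCast_eq_intCast_iff_dvd_sub _ _ _).1 (by exact_mod_cast hunit.mul_left_cancel h)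
  · have hdiag := card_le_card_uniqueFiber_add_two _ (hinjOn 1 (Nat.coprime_one_left m))
    have hanti := card_le_card_uniqueFiber_add_two _ (hinjOn 2 (Nat.coprime_two_left.2 hm))
    have e₁ : σ - id = fun r => σ r + (2 * (1 : ℕ) - 3 : ℤ) * r :=
      funext fun r => by push_cast; simp only [Pi.sub_apply, id_eq]; ring
    have e₂ : σ + id = fun r => σ r + (2 * (2 : ℕ) - 3 : ℤ) * r :=
      funext fun r => by push_cast; simp only [Pi.add_apply, id_eq]; ring
    rw [ZMod.card] at hdiag hanti
    rw [e₁, e₂]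
    omega

theorem exists_isNearQueens (h3 : ¬ 3 ∣ n) (h4 : ¬ 4 ∣ n) :
    ∃ σ : ZMod n → ZMod n, IsNearQueens σ := by
  have h3' {m : ℕ} (hm : m ∣ n) : Nat.Coprime 3 m :=
    (Nat.Prime.coprime_iff_not_dvd Nat.prime_three).2 fun h => h3 (h.trans hm)
  rcases Nat.even_or_odd n with hn | hn
  · obtain ⟨m, rfl⟩ := hn.two_dvd
    have hm : Odd m := Nat.not_even_iff_odd.1 fun ⟨t, ht⟩ => h4 ⟨t, by omega⟩
    have : NeZero m := ⟨hm.pos.ne'⟩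
    exact ⟨_, isNearQueens_three_mul_halfShift hm (h3' (dvd_mul_left m 2))⟩
  · exact ⟨_, isNearQueens_two_mul (Nat.Coprime.mul_left (Nat.coprime_two_left.2 hn) (h3' dvd_rfl))⟩

end NearQueens

theorem Nat.eq_and_eq_of_add_mul_eq {n a b c d : ℕ} (ha : a < n) (hc : c < n)
    (h : a + n * b = c + n * d) : a = c ∧ b = d := by
  have hac : a = c := by
    simpa [Nat.add_mul_mod_self_left, Nat.mod_eq_of_lt ha, Nat.mod_eq_of_lt hc] using
      congrArg (· % n) h
  subst hac
  exact ⟨rfl, Nat.eq_of_mul_eq_mul_left (by omega) (Nat.add_left_cancel h)⟩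

theorem mem_Ico_mul {n s M : ℕ} {x : ℤ} (h₀ : 0 ≤ x) (h : x < n * (s + 1)) (hs : s < M) :
    x ∈ Ico 0 (n * M : ℤ) :=
  mem_Ico.2 ⟨h₀, h.trans_le (by gcongr; omega)⟩

theorem card_le_patternCount {S : Finset (ℤ × ℤ)} {k : ℕ} (hk : 0 < k)
    {F : Finset ((ℤ × ℤ) × (ℤ × ℤ))} (hF : ∀ x ∈ F, x.1 ∈ Dirs ∧ IsPatternStart S k x.1 x.2) :
    #F ≤ patternCount S k := by
  have hfin : {dp : (ℤ × ℤ) × (ℤ × ℤ) | dp.1 ∈ Dirs ∧ IsPatternStart S k dp.1 dp.2}.Finite :=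
    (Dirs ×ˢ S).finite_toSet.subset fun dp h => by
      simpa using ⟨h.1, by simpa using h.2.1 0 hk⟩
  rw [patternCount, ← Set.ncard_coe_finset]
  exact Set.ncard_le_ncard (fun x hx => hF x hx) hfin

section HoledBox

variable {n : ℕ} (σ : ZMod n → ZMod n)

abbrev IsQueen (p : ℤ × ℤ) : Prop := (p.1 : ZMod n) = σ p.2

noncomputable def holedBox (M : ℕ) : Finset (ℤ × ℤ) :=
  (Ico 0 (n * M : ℤ) ×ˢ Ico 0 (n * M : ℤ)).filter fun p => ¬ IsQueen σ p

def queenAt (r : ZMod n) (s u : ℕ) : ℤ × ℤ :=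
  (((σ r).val + n * s : ℕ), ((r.val + n * u : ℕ)))

def QueenIsolated (q d : ℤ × ℤ) : Prop := ∀ j : ℤ, IsQueen σ (q + j • d) → (j : ZMod n) = 0

/-- The shift `v = 1` is for the antidiagonal `d = (1, -1)`, whose patterns run downwards from
the queen. -/
def queenFamily (m : ℕ) (d : ℤ × ℤ) (G : Finset (ZMod n)) (v : ℕ) :
    Finset ((ℤ × ℤ) × (ℤ × ℤ)) :=
  (G ×ˢ range m ×ˢ range m).image fun w => (d, queenAt σ w.1 w.2.1 (w.2.2 + v) + d)

theorem disjoint_queenFamily {m : ℕ} {d d' : ℤ × ℤ} (hd : d ≠ d') (G G' : Finset (ZMod n))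
    (v v' : ℕ) : Disjoint (queenFamily σ m d G v) (queenFamily σ m d' G' v') := by
  simp only [queenFamily, disjoint_left, mem_image]
  rintro _ ⟨w, -, rfl⟩ ⟨w', -, h⟩
  exact hd (congrArg Prod.fst h).symm

theorem isPatternStart_holedBox {k M : ℕ} (hkn : k + 1 = n) {q d : ℤ × ℤ} (hq : IsQueen σ q)
    (hiso : QueenIsolated σ q d)
    (hseg : ∀ j : ℤ, 0 < j → j < n → q + j • d ∈ Ico 0 (n * M : ℤ) ×ˢ Ico 0 (n * M : ℤ)) :
    IsPatternStart (holedBox σ M) k d (q + d) := by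
  refine ⟨fun t ht => ?_, by rw [add_sub_cancel_right]; exact fun h => (mem_filter.1 h).2 hq, ?_⟩
  · rw [show q + d + (t : ℤ) • d = q + ((t + 1 : ℕ) : ℤ) • d by
      push_cast; rw [add_smul, one_smul]; abel]
    refine mem_filter.2 ⟨hseg _ (by positivity) (by omega), fun h => ?_⟩
    have := hiso _ h
    rw [Int.cast_natCast, ZMod.natCast_eq_zero_iff] at this
    exact absurd (Nat.le_of_dvd (by omega) this) (by omega)
  · -- queens are `n`-periodic, so `q + n • d` is again a queen
    rw [show q + d + (k : ℤ) • d = q + (n : ℤ) • d by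
      rw [← hkn]; push_cast; rw [add_smul, one_smul]; abel]
    refine fun h => (mem_filter.1 h).2 ?_
    simpa [IsQueen] using hq

variable {σ}

theorem queenIsolated_horizontal {q : ℤ × ℤ} (hq : IsQueen σ q) : QueenIsolated σ q (1, 0) :=
  fun j hj => by
    simp only [IsQueen, Prod.fst_add, Prod.snd_add, Prod.smul_mk, smul_eq_mul, mul_one, mul_zero,
      add_zero, Int.cast_add] at hj
    rwa [← hq, add_eq_left] at hj

theorem queenIsolated_vertical (hσ : Function.Injective σ) {q : ℤ × ℤ} (hq : IsQueen σ q) :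
    QueenIsolated σ q (0, 1) := fun j hj => by
  simp only [IsQueen, Prod.fst_add, Prod.snd_add, Prod.smul_mk, smul_eq_mul, mul_one, mul_zero,
    add_zero, Int.cast_add] at hj
  rwa [hq, hσ.eq_iff, left_eq_add] at hj

theorem queenIsolated_diagonal [NeZero n] {q : ℤ × ℤ} (hq : IsQueen σ q)
    (hq₂ : (q.2 : ZMod n) ∈ uniqueFiber (σ - id)) : QueenIsolated σ q (1, 1) := fun j hj => by
  simp only [IsQueen, Prod.fst_add, Prod.snd_add, Prod.smul_mk, smul_eq_mul, mul_one,
    Int.cast_add] at hj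
  have := (mem_filter.1 hq₂).2 (q.2 + j) (by simp only [Pi.sub_apply, id]; rw [← hj, ← hq]; ring)
  rwa [add_eq_left] at this

theorem queenIsolated_antidiagonal [NeZero n] {q : ℤ × ℤ} (hq : IsQueen σ q)
    (hq₂ : (q.2 : ZMod n) ∈ uniqueFiber (σ + id)) : QueenIsolated σ q (1, -1) := fun j hj => by
  simp only [IsQueen, Prod.fst_add, Prod.snd_add, Prod.smul_mk, smul_eq_mul, mul_one, mul_neg,
    ← sub_eq_add_neg, Int.cast_add, Int.cast_sub] at hj
  have := (mem_filter.1 hq₂).2 (q.2 - j) (by simp only [Pi.add_apply, id]; rw [← hj, ← hq]; ring)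
  rwa [sub_eq_self] at this

variable (σ) [NeZero n]

@[simp]
theorem queenAt_fst_cast (r : ZMod n) (s u : ℕ) : ((queenAt σ r s u).1 : ZMod n) = σ r := by
  simp [queenAt]

@[simp]
theorem queenAt_snd_cast (r : ZMod n) (s u : ℕ) : ((queenAt σ r s u).2 : ZMod n) = r := by
  simp [queenAt]

theorem isQueen_queenAt (r : ZMod n) (s u : ℕ) : IsQueen σ (queenAt σ r s u) :=
  (queenAt_fst_cast σ r s u).trans (congrArg σ (queenAt_snd_cast σ r s u).symm)

theorem queenAt_inj {r r' : ZMod n} {s s' u u' : ℕ} (h : queenAt σ r s u = queenAt σ r' s' u') :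
    r = r' ∧ s = s' ∧ u = u' := by
  simp only [queenAt, Prod.mk.injEq, Nat.cast_inj] at h
  obtain ⟨hr, rfl⟩ := Nat.eq_and_eq_of_add_mul_eq (ZMod.val_lt r) (ZMod.val_lt r') h.2
  obtain rfl := ZMod.val_injective n hr
  exact ⟨rfl, (Nat.eq_and_eq_of_add_mul_eq (ZMod.val_lt _) (ZMod.val_lt _) h.1).2, rfl⟩

theorem card_holedBox_add_le (M : ℕ) : #(holedBox σ M) + n * (M * M) ≤ (n * M) * (n * M) := by
  have hqueens :
      n * (M * M) ≤ #((Ico 0 (n * M : ℤ) ×ˢ Ico 0 (n * M : ℤ)).filter (IsQueen σ)) := by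
    convert card_le_card_of_injOn (s := univ ×ˢ range M ×ˢ range M)
      (fun w => queenAt σ w.1 w.2.1 w.2.2) ?_ ?_
    · simp
    · rintro ⟨r, s, u⟩ hw
      simp only [coe_product, coe_range, Set.mem_prod, Set.mem_Iio, coe_univ, Set.mem_univ,
        true_and] at hw
      refine mem_filter.2 ⟨mem_product.2 ⟨mem_Ico_mul (s := s) (Int.natCast_nonneg _) ?_ hw.1,
        mem_Ico_mul (s := u) (Int.natCast_nonneg _) ?_ hw.2⟩, isQueen_queenAt σ r s u⟩
      · have := ZMod.val_lt (σ r); simp only [queenAt, Nat.cast_add, Nat.cast_mul]; linarith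
      · have := ZMod.val_lt r; simp only [queenAt, Nat.cast_add, Nat.cast_mul]; linarith
    · rintro ⟨r, s, u⟩ - ⟨r', s', u'⟩ - h
      obtain ⟨rfl, rfl, rfl⟩ := queenAt_inj σ h
      rfl
  have hsplit := card_filter_add_card_filter_not (s := Ico 0 (n * M : ℤ) ×ˢ Ico 0 (n * M : ℤ))
    (IsQueen σ)
  have hside : (n * M : ℤ).toNat = n * M := by norm_cast
  rw [card_product, Int.card_Ico, sub_zero, hside] at hsplit
  rw [holedBox]
  omega

theorem queenAt_add_smul_mem_box {r : ZMod n} {s u v m : ℕ} (hs : s < m) (hu : u < m)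
    {d : ℤ × ℤ} (hd₁ : d.1 = 0 ∨ d.1 = 1) (hd₂ : v = 0 ∧ (d.2 = 0 ∨ d.2 = 1) ∨ v = 1 ∧ d.2 = -1)
    {j : ℤ} (hj₀ : 0 < j) (hj : j < n) :
    queenAt σ r s (u + v) + j • d ∈ Ico 0 (n * (m + 1 : ℕ) : ℤ) ×ˢ Ico 0 (n * (m + 1 : ℕ) : ℤ) := by
  have h₁ : 0 ≤ j * d.1 ∧ j * d.1 ≤ n := by rcases hd₁ with h | h <;> rw [h] <;> omega
  have h₂ : 0 ≤ n * v + j * d.2 ∧ n * v + j * d.2 ≤ n := by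
    rcases hd₂ with ⟨rfl, h | h⟩ | ⟨rfl, h⟩ <;> rw [h] <;> push_cast <;> omega
  have := ZMod.val_lt r
  have := ZMod.val_lt (σ r)
  refine mem_product.2 ⟨mem_Ico_mul (s := s + 1) ?_ ?_ (by omega),
    mem_Ico_mul (s := u + 1) ?_ ?_ (by omega)⟩ <;>
  · simp only [queenAt, Prod.fst_add, Prod.snd_add, Prod.smul_fst, Prod.smul_snd, smul_eq_mul,
      Nat.cast_add, Nat.cast_mul, Nat.cast_one]
    nlinarith

theorem card_queenFamily (m : ℕ) (d : ℤ × ℤ) (G : Finset (ZMod n)) (v : ℕ) :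
    #(queenFamily σ m d G v) = #G * (m * m) := by
  rw [queenFamily, card_image_of_injective, card_product, card_product, card_range]
  rintro ⟨r, s, u⟩ ⟨r', s', u'⟩ h
  obtain ⟨rfl, rfl, h⟩ := queenAt_inj σ (add_right_cancel (Prod.mk.inj h).2)
  exact Prod.ext rfl (Prod.ext rfl (Nat.add_right_cancel h))

theorem isPatternStart_of_mem_queenFamily {k m : ℕ} (hkn : k + 1 = n) {d : ℤ × ℤ}
    (hd : d ∈ Dirs) {G : Finset (ZMod n)} {v : ℕ}
    (hiso : ∀ r ∈ G, ∀ s < m, ∀ u < m, QueenIsolated σ (queenAt σ r s (u + v)) d)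
    (hd₁ : d.1 = 0 ∨ d.1 = 1) (hd₂ : v = 0 ∧ (d.2 = 0 ∨ d.2 = 1) ∨ v = 1 ∧ d.2 = -1)
    {x : (ℤ × ℤ) × (ℤ × ℤ)} (hx : x ∈ queenFamily σ m d G v) :
    x.1 ∈ Dirs ∧ IsPatternStart (holedBox σ (m + 1)) k x.1 x.2 := by
  obtain ⟨⟨r, s, u⟩, hw, rfl⟩ := mem_image.1 hx
  simp only [mem_product, mem_range] at hw
  exact ⟨hd, isPatternStart_holedBox σ hkn (isQueen_queenAt σ _ _ _)
    (hiso r hw.1 s hw.2.1 u hw.2.2) fun j hj₀ hj =>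
      queenAt_add_smul_mem_box σ hw.2.1 hw.2.2 hd₁ hd₂ hj₀ hj⟩

theorem patternCount_holedBox_ge (hσ : IsNearQueens σ) {k : ℕ} (hkn : k + 1 = n)
    (hk : 0 < k) (m : ℕ) : 4 * k * (m * m) ≤ patternCount (holedBox σ (m + 1)) k := by
  set F₁ := queenFamily σ m (1, 0) univ 0
  set F₂ := queenFamily σ m (0, 1) univ 0
  set F₃ := queenFamily σ m (1, 1) (uniqueFiber (σ - id)) 0
  set F₄ := queenFamily σ m (1, -1) (uniqueFiber (σ + id)) 1
  have hcard : #(F₁ ∪ F₂ ∪ F₃ ∪ F₄)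
      = (n + n + #(uniqueFiber (σ - id)) + #(uniqueFiber (σ + id))) * (m * m) := by
    have h {d d' : ℤ × ℤ} (hd : d ≠ d') := disjoint_queenFamily σ (m := m) hd
    rw [card_union_of_disjoint (disjoint_union_left.2 ⟨disjoint_union_left.2
        ⟨h (by simp) _ _ _ _, h (by simp) _ _ _ _⟩, h (by simp) _ _ _ _⟩),
      card_union_of_disjoint (disjoint_union_left.2 ⟨h (by simp) _ _ _ _, h (by simp) _ _ _ _⟩),
      card_union_of_disjoint (h (by simp) _ _ _ _)]
    simp only [card_queenFamily, card_univ, ZMod.card]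
    ring
  calc 4 * k * (m * m)
      ≤ (n + n + #(uniqueFiber (σ - id)) + #(uniqueFiber (σ + id))) * (m * m) :=
        Nat.mul_le_mul_right _ (by have := hσ.2; omega)
    _ = #(F₁ ∪ F₂ ∪ F₃ ∪ F₄) := hcard.symm
    _ ≤ patternCount (holedBox σ (m + 1)) k := card_le_patternCount hk fun x hx => ?_
  simp only [mem_union] at hx
  rcases hx with ((hx | hx) | hx) | hx
  · exact isPatternStart_of_mem_queenFamily σ hkn (by simp [Dirs])
      (fun r _ s _ u _ => queenIsolated_horizontal (isQueen_queenAt σ r s _))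
      (by norm_num) (by norm_num) hx
  · exact isPatternStart_of_mem_queenFamily σ hkn (by simp [Dirs])
      (fun r _ s _ u _ => queenIsolated_vertical hσ.1 (isQueen_queenAt σ r s _))
      (by norm_num) (by norm_num) hx
  · exact isPatternStart_of_mem_queenFamily σ hkn (by simp [Dirs])
      (fun r hr s _ u _ => queenIsolated_diagonal (isQueen_queenAt σ r s _)
        (by rwa [queenAt_snd_cast]))
      (by norm_num) (by norm_num) hx
  · exact isPatternStart_of_mem_queenFamily σ hkn (by simp [Dirs])
      (fun r hr s _ u _ => queenIsolated_antidiagonal (isQueen_queenAt σ r s _)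
        (by rwa [queenAt_snd_cast]))
      (by norm_num) (by norm_num) hx

end HoledBox

theorem minPoints_le_card (S : Finset (ℤ × ℤ)) (k : ℕ) : minPoints k (patternCount S k) ≤ #S :=
  Nat.sInf_le ⟨S, rfl, rfl⟩

theorem cast_div_le_of_le_mul_sq {a P k m : ℕ} (hk : 0 < k) (hm : 2 * (k * (k + 1) + 1) ≤ m)
    (ha : a ≤ k * (k + 1) * ((m + 1) * (m + 1))) (hP : 4 * k * (m * m) ≤ P) :
    (a : ℝ) / P ≤ ((k : ℝ) * (k + 1) + 1) / (4 * k) := by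
  have hP₀ : 0 < P :=
    lt_of_lt_of_le (Nat.mul_pos (by omega) (Nat.mul_pos (by omega) (by omega))) hP
  rw [div_le_div_iff₀ (by exact_mod_cast hP₀) (by exact_mod_cast Nat.mul_pos four_pos hk)]
  have hsq : k * (k + 1) * ((m + 1) * (m + 1)) ≤ (k * (k + 1) + 1) * (m * m) := by nlinarith
  have : a * (4 * k) ≤ (k * (k + 1) + 1) * P :=
    calc a * (4 * k) ≤ k * (k + 1) * ((m + 1) * (m + 1)) * (4 * k) := Nat.mul_le_mul_right _ ha
      _ ≤ (k * (k + 1) + 1) * (m * m) * (4 * k) := Nat.mul_le_mul_right _ hsq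
      _ = (k * (k + 1) + 1) * (4 * k * (m * m)) := by ring
      _ ≤ (k * (k + 1) + 1) * P := Nat.mul_le_mul_left _ hP
  exact_mod_cast this

theorem stmt15 (k : ℕ) (hk : 2 ≤ k) (h3 : ¬ 3 ∣ (k + 1)) (h4 : ¬ 4 ∣ (k + 1))
    (L : ℝ) (hL : Tendsto (fun n : ℕ => (minPoints k n : ℝ) / n) atTop (nhds L)) :
    L ≤ ((k : ℝ) * (k + 1) + 1) / (4 * k) := by
  obtain ⟨σ, hσ⟩ := exists_isNearQueens h3 h4
  have hP (m : ℕ) : 4 * k * (m * m) ≤ patternCount (holedBox σ (m + 1)) k :=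
    patternCount_holedBox_ge σ hσ rfl (by omega) m
  have hcard (m : ℕ) : #(holedBox σ (m + 1)) ≤ k * (k + 1) * ((m + 1) * (m + 1)) := by
    have := card_holedBox_add_le σ (m + 1)
    have e : (k + 1) * (m + 1) * ((k + 1) * (m + 1))
        = k * (k + 1) * ((m + 1) * (m + 1)) + (k + 1) * ((m + 1) * (m + 1)) := by ring
    omega
  have hφ : Tendsto (fun m => patternCount (holedBox σ (m + 1)) k) atTop atTop :=
    tendsto_atTop_mono (fun m => (Nat.le_mul_self m).trans
      ((Nat.le_mul_of_pos_left _ (by omega)).trans (hP m))) tendsto_id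
  refine le_of_tendsto (hL.comp hφ) ?_
  filter_upwards [eventually_ge_atTop (2 * (k * (k + 1) + 1))] with m hm
  exact cast_div_le_of_le_mul_sq (by omega) hm ((minPoints_le_card _ _).trans (hcard m)) (hP m)
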